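/- arXiv:1401.3681 — 2 statements merged into one kernel-verified Lean document; each statement's English description precedes it below -/
import Mathlib

section
/- Let A be a maximal monotone operator on ℝ^d, Π a generalized projection for A, y càdlàg with y_0 ∈ closure(D(A)), and (x,k) a solution of SP(A,Π;y). Then Δk_t = x_{t−} + Δy_t − Π(x_{t−} + Δy_t) for every t > 0, and consequently |Δk_t| ≤ 2|Δy_t| for every t ≥ 0. -/
/-!
Since `x = y - k`, `Δk_t = z - x_t` with `z = x_{t-} + Δy_t`. If `Δk_t = 0` then `x_t = z`, so
`z ∈ closure (D(A))` is fixed by `Π`; otherwise condition (iii) gives `x_t = Π z`. Either way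
`Δk_t = z - Π z`. As `x_{t-} ∈ closure (D(A))` is fixed by the non-expansive `Π`,
`|z - Π z| ≤ |z - x_{t-}| + |Π x_{t-} - Π z| ≤ 2 |Δy_t|`.
-/

open scoped RealInnerProductSpace
open Filter Set Function MeasureTheory Topology

noncomputable section

/-- Euclidean space `ℝ^d`. -/
abbrev Euc (d : ℕ) : Type := EuclideanSpace ℝ (Fin d)

/-- The domain `D(A)` of a set-valued operator identified with its graph. -/
def opDomain {d : ℕ} (A : Set (Euc d × Euc d)) : Set (Euc d) := {z | ∃ y, (z, y) ∈ A}

/-- Monotonicity of the graph `A`. -/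
def MonotoneGraph {d : ℕ} (A : Set (Euc d × Euc d)) : Prop :=
  ∀ p ∈ A, ∀ q ∈ A, 0 ≤ ⟪p.2 - q.2, p.1 - q.1⟫

/-- Maximal monotonicity of the graph `A`. -/
def MaximalMonotoneGraph {d : ℕ} (A : Set (Euc d × Euc d)) : Prop :=
  MonotoneGraph A ∧
    ∀ z y : Euc d, (∀ p ∈ A, 0 ≤ ⟪y - p.2, z - p.1⟫) → (z, y) ∈ A

/-- A generalized (non-expansive) projection onto `closure (D(A))`. -/
def IsGenProj {d : ℕ} (A : Set (Euc d × Euc d)) (proj : Euc d → Euc d) : Prop :=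
  (∀ z, proj z ∈ closure (opDomain A)) ∧
  (∀ z ∈ closure (opDomain A), proj z = z) ∧
  (∀ z z', ‖proj z - proj z'‖ ≤ ‖z - z'‖)

/-- `y` is càdlàg on `[0,∞)`: right-continuous and with left limits. -/
def Cadlag {d : ℕ} (y : ℝ → Euc d) : Prop :=
  (∀ t : ℝ, 0 ≤ t → ContinuousWithinAt y (Ici t) t) ∧
  (∀ t : ℝ, 0 < t → ∃ l, Tendsto y (𝓝[<] t) (𝓝 l))

/-- The jump `Δy_t = y_t - y_{t-}` (with `Δy_0 := 0`). -/
def jump {d : ℕ} (y : ℝ → Euc d) (t : ℝ) : Euc d :=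
  if 0 < t then y t - leftLim y t else 0

/-- The left limit `y_{t-}` (with `y_{0-} := y_0`). -/
def lleft {d : ℕ} (y : ℝ → Euc d) (t : ℝ) : Euc d :=
  if 0 < t then leftLim y t else y 0

/-- Continuous part `k^c_t = k_t - ∑_{s ≤ t} Δk_s` of a function of locally bounded
variation. -/
def contPart {d : ℕ} (k : ℝ → Euc d) : ℝ → Euc d :=
  fun t => k t - ∑' s : Icc (0 : ℝ) t, jump k ↑s

/-- `lsInt g k s t I` : the Lebesgue–Stieltjes integral `∫_(s,t] ⟪g_u, dk_u⟫` equals `I`,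
expressed via convergence of right-endpoint Riemann–Stieltjes sums (which converge to the
Lebesgue–Stieltjes integral for càdlàg `g` and càdlàg `k` of bounded variation). -/
def lsInt {d : ℕ} (g k : ℝ → Euc d) (s t I : ℝ) : Prop :=
  ∀ ε > 0, ∃ δ > 0, ∀ (n : ℕ) (τ : ℕ → ℝ), τ 0 = s → τ n = t →
    (∀ i < n, τ i < τ (i + 1) ∧ τ (i + 1) - τ i ≤ δ) →
    |(∑ i ∈ Finset.range n, ⟪g (τ (i + 1)), k (τ (i + 1)) - k (τ i)⟫) - I| ≤ ε

/-- `lsIntLeft g k s t I` : the Lebesgue–Stieltjes integral `∫_(s,t] ⟪g_{u-}, dk_u⟫` equals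
`I`, expressed via convergence of left-endpoint Riemann–Stieltjes sums. -/
def lsIntLeft {d : ℕ} (g k : ℝ → Euc d) (s t I : ℝ) : Prop :=
  ∀ ε > 0, ∃ δ > 0, ∀ (n : ℕ) (τ : ℕ → ℝ), τ 0 = s → τ n = t →
    (∀ i < n, τ i < τ (i + 1) ∧ τ (i + 1) - τ i ≤ δ) →
    |(∑ i ∈ Finset.range n, ⟪g (τ i), k (τ (i + 1)) - k (τ i)⟫) - I| ≤ ε

/-- `(x, k)` solves the Skorokhod problem `SP(A, Π; y)`. -/
def SkorokhodSolution {d : ℕ} (A : Set (Euc d × Euc d)) (proj : Euc d → Euc d)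
    (y x k : ℝ → Euc d) : Prop :=
  Cadlag x ∧ Cadlag k ∧
  (∀ t : ℝ, 0 ≤ t → x t = y t - k t ∧ x t ∈ closure (opDomain A)) ∧
  LocallyBoundedVariationOn k (Ici 0) ∧ k 0 = 0 ∧
  (∀ α β : Euc d, (α, β) ∈ A → ∀ s t : ℝ, 0 ≤ s → s < t →
    ∃ I : ℝ, lsInt (fun u => x u - α) (contPart k) s t I ∧
      0 ≤ I - ∫ u in Ioc s t, ⟪x u - α, β⟫) ∧
  (∀ t : ℝ, 0 ≤ t → jump k t ≠ 0 → x t = proj (lleft x t + jump y t))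

theorem norm_add_sub_apply_le_two_mul {E : Type*} [SeminormedAddCommGroup E] {f : E → E}
    (hf : ∀ z z', ‖f z - f z'‖ ≤ ‖z - z'‖) {p : E} (hp : f p = p) (v : E) :
    ‖p + v - f (p + v)‖ ≤ 2 * ‖v‖ := by
  calc ‖p + v - f (p + v)‖ = ‖v + (f p - f (p + v))‖ := by rw [hp]; abel_nf
    _ ≤ ‖v‖ + ‖p - (p + v)‖ := (norm_add_le _ _).trans (add_le_add_right (hf _ _) _)
    _ = 2 * ‖v‖ := by rw [sub_add_cancel_left, norm_neg, two_mul]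

variable {d : ℕ}

theorem Cadlag.tendsto_leftLim {y : ℝ → Euc d} (hy : Cadlag y) {t : ℝ} (ht : 0 < t) :
    Tendsto y (𝓝[<] t) (𝓝 (leftLim y t)) := by
  obtain ⟨l, hl⟩ := hy.2 t ht
  rwa [leftLim_eq_of_tendsto hl]

namespace SkorokhodSolution

variable {A : Set (Euc d × Euc d)} {proj : Euc d → Euc d} {y x k : ℝ → Euc d}
  {t : ℝ}

theorem eq_sub (hsol : SkorokhodSolution A proj y x k) (ht : 0 ≤ t) : x t = y t - k t :=
  (hsol.2.2.1 t ht).1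

theorem mem_closure (hsol : SkorokhodSolution A proj y x k) (ht : 0 ≤ t) :
    x t ∈ closure (opDomain A) :=
  (hsol.2.2.1 t ht).2

theorem eq_proj_of_jump_ne_zero (hsol : SkorokhodSolution A proj y x k) (ht : 0 ≤ t)
    (hk : jump k t ≠ 0) : x t = proj (lleft x t + jump y t) :=
  hsol.2.2.2.2.2.2 t ht hk

theorem lleft_mem_closure (hsol : SkorokhodSolution A proj y x k) (ht : 0 ≤ t) :
    lleft x t ∈ closure (opDomain A) := by
  rcases ht.eq_or_lt with rfl | ht
  · simpa [lleft] using hsol.mem_closure le_rfl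
  rw [lleft, if_pos ht]
  refine isClosed_closure.mem_of_tendsto (hsol.1.tendsto_leftLim ht) ?_
  filter_upwards [Ioo_mem_nhdsLT ht] with u hu using hsol.mem_closure hu.1.le

theorem leftLim_eq_sub (hsol : SkorokhodSolution A proj y x k) (hy : Cadlag y) (ht : 0 < t) :
    leftLim x t = leftLim y t - leftLim k t := by
  refine tendsto_nhds_unique (hsol.1.tendsto_leftLim ht) ?_
  refine ((hy.tendsto_leftLim ht).sub (hsol.2.1.tendsto_leftLim ht)).congr' ?_
  filter_upwards [Ioo_mem_nhdsLT ht] with u hu using (hsol.eq_sub hu.1.le).symm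

theorem jump_eq (hsol : SkorokhodSolution A proj y x k) (hy : Cadlag y) (ht : 0 ≤ t) :
    jump k t = lleft x t + jump y t - x t := by
  rcases ht.eq_or_lt with rfl | ht
  · simp [jump, lleft]
  rw [hsol.eq_sub ht.le, lleft, jump, jump, if_pos ht, if_pos ht, if_pos ht,
    hsol.leftLim_eq_sub hy ht]
  abel

theorem jump_eq_sub_proj (hsol : SkorokhodSolution A proj y x k)
    (hfix : ∀ z ∈ closure (opDomain A), proj z = z) (hy : Cadlag y) (ht : 0 ≤ t) :
    jump k t = lleft x t + jump y t - proj (lleft x t + jump y t) := by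
  by_cases hk : jump k t = 0
  · have hxt : lleft x t + jump y t = x t := by
      rw [← sub_eq_zero, ← hsol.jump_eq hy ht, hk]
    rw [hxt, hfix _ (hsol.mem_closure ht), sub_self, hk]
  · rw [← hsol.eq_proj_of_jump_ne_zero ht hk, hsol.jump_eq hy ht]

end SkorokhodSolution

theorem skorokhod_problem_jump_formula_general {d : ℕ} (A : Set (Euc d × Euc d))
    (proj : Euc d → Euc d) (hproj : IsGenProj A proj)
    (y x k : ℝ → Euc d) (hy : Cadlag y)
    (hsol : SkorokhodSolution A proj y x k) :
    (∀ t : ℝ, 0 < t →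
      jump k t = lleft x t + jump y t - proj (lleft x t + jump y t)) ∧
    (∀ t : ℝ, 0 ≤ t → ‖jump k t‖ ≤ 2 * ‖jump y t‖) := by
  obtain ⟨-, hfix, hnonexp⟩ := hproj
  refine ⟨fun t ht => hsol.jump_eq_sub_proj hfix hy ht.le, fun t ht => ?_⟩
  rw [hsol.jump_eq_sub_proj hfix hy ht]
  exact norm_add_sub_apply_le_two_mul hnonexp (hfix _ (hsol.lleft_mem_closure ht)) _

/-- For a solution `(x, k)` of `SP(A, Π; y)`:
`Δk_t = x_{t−} + Δy_t − Π(x_{t−} + Δy_t)` for every `t > 0`, and consequently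
`|Δk_t| ≤ 2 |Δy_t|` for every `t ≥ 0`. -/
theorem skorokhod_problem_jump_formula {d : ℕ} (A : Set (Euc d × Euc d))
    (proj : Euc d → Euc d) (hA : MaximalMonotoneGraph A) (hproj : IsGenProj A proj)
    (y x k : ℝ → Euc d) (hy : Cadlag y) (hy0 : y 0 ∈ closure (opDomain A))
    (hsol : SkorokhodSolution A proj y x k) :
    (∀ t : ℝ, 0 < t →
      jump k t = lleft x t + jump y t - proj (lleft x t + jump y t)) ∧
    (∀ t : ℝ, 0 ≤ t → ‖jump k t‖ ≤ 2 * ‖jump y t‖) :=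
  skorokhod_problem_jump_formula_general A proj hproj y x k hy hsol

end
end

section
/- Let A be a maximal monotone operator on ℝ^d and let y : [0,∞) → ℝ^d be continuous with y_0 ∈ closure(D(A)). If Π and Π' are generalized projections for A, (x,k) is a solution of SP(A,Π;y) and (x',k') is a solution of SP(A,Π';y), then x and k are continuous functions and (x,k) = (x',k'); i.e., for continuous input the solution of the Skorokhod problem is continuous and does not depend on the choice of generalized projection. -/
open scoped RealInnerProductSpace
open Filter Set Function MeasureTheory Topology

noncomputable section

/-!
Since `y` is continuous, a jump of `k` at `t` would give
`x_t = Π(x_{t-} + Δy_t) = Π(x_{t-}) = x_{t-}`, so `k = y - x` could not jump after all: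
`k`, hence `x`, is continuous and `k^c = k`.

For two solutions, `z = x - x' = -(k - k')`, so along any partition
`|z_t|² ≤ 2 ∑ ⟪z, Δz⟫ = -2 ∑ ⟪x - x', Δ(k - k')⟫`. These Riemann–Stieltjes sums cannot stay
below a negative constant: localizing the Skorokhod inequalities by bisection around a point
`u`, the normalized increments of `k` and `k'` become elements of `A(x_u)` and `A(x'_u)` (or
normal vectors to `closure (D(A))` there), and monotonicity of `A` makes the sums nonnegative in
the limit.
-/

section

variable {d : ℕ} {E : Type*} [NormedAddCommGroup E] [InnerProductSpace ℝ E]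

lemma tendsto_nhdsLT_of_continuousOn_Ici {X : Type*} [TopologicalSpace X] {y : ℝ → X}
    (hy : ContinuousOn y (Ici 0)) {t : ℝ} (ht : 0 < t) : Tendsto y (𝓝[<] t) (𝓝 (y t)) :=
  ((hy t ht.le).continuousAt (Ici_mem_nhds ht)).tendsto.mono_left nhdsWithin_le_nhds

lemma jump_eq_zero_of_continuousOn {y : ℝ → Euc d} (hy : ContinuousOn y (Ici 0)) (t : ℝ) :
    jump y t = 0 := by
  unfold jump
  split_ifs with ht
  · rw [leftLim_eq_of_tendsto (tendsto_nhdsLT_of_continuousOn_Ici hy ht), sub_self]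
  · rfl

lemma contPart_eq_self {k : ℝ → Euc d} (hk : ∀ t, jump k t = 0) : contPart k = k := by
  funext t
  simp [contPart, hk]

lemma Cadlag.continuousOn_of_jump_eq_zero {k : ℝ → Euc d} (hk : Cadlag k)
    (hjump : ∀ t, jump k t = 0) : ContinuousOn k (Ici 0) := by
  intro t (ht : 0 ≤ t)
  rcases ht.eq_or_lt with rfl | ht
  · exact hk.1 0 le_rfl
  obtain ⟨l, hl⟩ := hk.2 t ht
  have hlt : l = k t := by
    have := hjump t
    rw [jump, if_pos ht, leftLim_eq_of_tendsto hl, sub_eq_zero] at this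
    exact this.symm
  refine (continuousAt_iff_continuous_left_right.mpr ⟨?_, hk.1 t ht.le⟩).continuousWithinAt
  rw [← continuousWithinAt_Iio_iff_Iic, ContinuousWithinAt, ← hlt]
  exact hl

lemma SkorokhodSolution.jump_eq_zero {A : Set (Euc d × Euc d)} {proj : Euc d → Euc d}
    {y x k : ℝ → Euc d} (hsol : SkorokhodSolution A proj y x k) (hproj : IsGenProj A proj)
    (hy : ContinuousOn y (Ici 0)) (t : ℝ) : jump k t = 0 := by
  obtain ⟨hx, -, hxk, -, -, -, hjump⟩ := hsol
  rcases le_or_gt t 0 with ht | ht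
  · simp [jump, not_lt.mpr ht]
  by_contra hne
  obtain ⟨l, hl⟩ := hx.2 t ht
  have hnear : ∀ᶠ u in 𝓝[<] t, 0 ≤ u :=
    mem_of_superset (Ioo_mem_nhdsLT ht) fun u hu => hu.1.le
  have hl_mem : l ∈ closure (opDomain A) :=
    isClosed_closure.mem_of_tendsto hl (hnear.mono fun u hu => (hxk u hu).2)
  have hxt : x t = l := by
    rw [hjump t ht.le hne, jump_eq_zero_of_continuousOn hy, add_zero, lleft, if_pos ht,
      leftLim_eq_of_tendsto hl, hproj.2.1 l hl_mem]
  have hk_lim : Tendsto k (𝓝[<] t) (𝓝 (y t - l)) := by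
    refine ((tendsto_nhdsLT_of_continuousOn_Ici hy ht).sub hl).congr'
      (hnear.mono fun u hu => ?_)
    rw [(hxk u hu).1, sub_sub_cancel]
  apply hne
  rw [jump, if_pos ht, leftLim_eq_of_tendsto hk_lim, ← hxt, (hxk t ht.le).1, sub_sub_cancel,
    sub_self]

def unifPart (a b : ℝ) (m i : ℕ) : ℝ := a + i * (b - a) / m

lemma unifPart_zero (a b : ℝ) (m : ℕ) : unifPart a b m 0 = a := by simp [unifPart]

lemma unifPart_self (a b : ℝ) {m : ℕ} (hm : m ≠ 0) : unifPart a b m m = b := by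
  rw [unifPart, mul_div_cancel_left₀ _ (Nat.cast_ne_zero.mpr hm : (m : ℝ) ≠ 0)]
  ring

lemma unifPart_succ_sub (a b : ℝ) (m i : ℕ) :
    unifPart a b m (i + 1) - unifPart a b m i = (b - a) / m := by
  simp only [unifPart]
  push_cast
  ring

lemma unifPart_mono {a b : ℝ} (hab : a ≤ b) (m : ℕ) : Monotone (unifPart a b m) := by
  intro i j hij
  simp only [unifPart, mul_div_assoc]
  gcongr

lemma unifPart_mem_Icc {a b : ℝ} (hab : a ≤ b) {m i : ℕ} (hm : m ≠ 0) (hi : i ≤ m) :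
    unifPart a b m i ∈ Icc a b := by
  constructor
  · simpa only [unifPart_zero] using unifPart_mono hab m (Nat.zero_le i)
  · simpa only [unifPart_self a b hm] using unifPart_mono hab m hi

lemma unifPart_two_mul (a b : ℝ) {m : ℕ} (hm : m ≠ 0) (i : ℕ) :
    unifPart a b (2 * m) i = unifPart a ((a + b) / 2) m i := by
  have : (m : ℝ) ≠ 0 := Nat.cast_ne_zero.mpr hm
  simp only [unifPart]
  push_cast
  field_simp
  ring

lemma unifPart_two_mul_add (a b : ℝ) {m : ℕ} (hm : m ≠ 0) (i : ℕ) :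
    unifPart a b (2 * m) (m + i) = unifPart ((a + b) / 2) b m i := by
  have : (m : ℝ) ≠ 0 := Nat.cast_ne_zero.mpr hm
  simp only [unifPart]
  push_cast
  field_simp
  ring

def rsSum (z w : ℝ → E) (a b : ℝ) (m : ℕ) : ℝ :=
  ∑ i ∈ Finset.range m,
    ⟪z (unifPart a b m (i + 1)), w (unifPart a b m (i + 1)) - w (unifPart a b m i)⟫

lemma rsSum_two_mul (z w : ℝ → E) (a b : ℝ) {m : ℕ} (hm : m ≠ 0) :
    rsSum z w a b (2 * m) = rsSum z w a ((a + b) / 2) m + rsSum z w ((a + b) / 2) b m := by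
  rw [rsSum, rsSum, rsSum, two_mul, Finset.sum_range_add, ← two_mul]
  congr 1
  · simp only [unifPart_two_mul a b hm]
  · simp only [add_assoc, unifPart_two_mul_add a b hm]

lemma rsSum_neg_right (z w : ℝ → E) (a b : ℝ) (m : ℕ) :
    rsSum z (-w) a b m = -rsSum z w a b m := by
  simp only [rsSum, Pi.neg_apply, ← neg_sub', inner_neg_right, Finset.sum_neg_distrib]

lemma rsSum_congr_right {z w w' : ℝ → E} {a b : ℝ} (hab : a ≤ b) {m : ℕ}
    (h : EqOn w w' (Icc a b)) : rsSum z w a b m = rsSum z w' a b m := by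
  rcases eq_or_ne m 0 with rfl | hm
  · simp [rsSum]
  refine Finset.sum_congr rfl fun i hi => ?_
  have hi := Finset.mem_range.mp hi
  rw [h (unifPart_mem_Icc hab hm hi.le), h (unifPart_mem_Icc hab hm hi)]

lemma norm_sq_le_two_mul_rsSum (z : ℝ → E) (a b : ℝ) {m : ℕ} (hm : m ≠ 0)
    (hz : z a = 0) : ‖z b‖ ^ 2 ≤ 2 * rsSum z z a b m := by
  have hstep (p q : E) : ‖p‖ ^ 2 - ‖q‖ ^ 2 ≤ 2 * ⟪p, p - q⟫ := by
    rw [inner_sub_right, real_inner_self_eq_norm_sq]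
    nlinarith [norm_sub_sq_real p q, sq_nonneg ‖p - q‖]
  calc ‖z b‖ ^ 2
      = ∑ i ∈ Finset.range m,
          (‖z (unifPart a b m (i + 1))‖ ^ 2 - ‖z (unifPart a b m i)‖ ^ 2) := by
        rw [Finset.sum_range_sub (fun i => ‖z (unifPart a b m i)‖ ^ 2), unifPart_self a b hm,
          unifPart_zero, hz, norm_zero]
        ring
    _ ≤ 2 * rsSum z z a b m := by
        rw [rsSum, Finset.mul_sum]
        exact Finset.sum_le_sum fun i _ => hstep _ _

lemma sum_norm_sub_le_variationOnFromTo {F : Type*} [SeminormedAddCommGroup F] {k : ℝ → F}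
    {s : Set ℝ} (hk : LocallyBoundedVariationOn k s) {τ : ℕ → ℝ} {n : ℕ}
    (hτ : MonotoneOn τ (Iic n)) (hs : ∀ i ≤ n, τ i ∈ s) :
    ∑ i ∈ Finset.range n, ‖k (τ (i + 1)) - k (τ i)‖ ≤ variationOnFromTo k s (τ 0) (τ n) := by
  have hle {i j : ℕ} (hij : i ≤ j) (hj : j ≤ n) : τ i ≤ τ j :=
    hτ (mem_Iic.mpr (hij.trans hj)) (mem_Iic.mpr hj) hij
  have hsum := eVariationOn.sum_le_of_monotoneOn_Iic (f := k) (s := s ∩ Icc (τ 0) (τ n)) hτ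
    fun i hi => ⟨hs i hi, hle (Nat.zero_le i) hi, hle hi le_rfl⟩
  simp only [edist_dist, dist_eq_norm] at hsum
  rw [← ENNReal.ofReal_sum_of_nonneg fun i _ => norm_nonneg _,
    ENNReal.ofReal_le_iff_le_toReal (hk _ _ (hs 0 (Nat.zero_le n)) (hs n le_rfl))] at hsum
  rwa [variationOnFromTo.eq_of_le _ _ (hle (Nat.zero_le n) le_rfl)]

lemma norm_sub_le_variationOnFromTo {F : Type*} [SeminormedAddCommGroup F] {k : ℝ → F}
    {s : Set ℝ} (hk : LocallyBoundedVariationOn k s) {a b : ℝ} (ha : a ∈ s) (hb : b ∈ s)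
    (hab : a ≤ b) : ‖k b - k a‖ ≤ variationOnFromTo k s a b := by
  have h := eVariationOn.edist_le k (s := s ∩ Icc a b) ⟨ha, le_rfl, hab⟩ ⟨hb, hab, le_rfl⟩
  rw [variationOnFromTo.eq_of_le _ _ hab, ← dist_eq_norm, dist_comm, dist_edist]
  exact ENNReal.toReal_mono (hk a b ha hb) h

lemma sum_norm_unifPart_sub_le {F : Type*} [SeminormedAddCommGroup F] {k : ℝ → F}
    {s : Set ℝ} (hk : LocallyBoundedVariationOn k s) {a b : ℝ} (hab : a ≤ b) (hs : Icc a b ⊆ s)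
    {m : ℕ} (hm : m ≠ 0) :
    ∑ i ∈ Finset.range m, ‖k (unifPart a b m (i + 1)) - k (unifPart a b m i)‖
      ≤ variationOnFromTo k s a b := by
  simpa only [unifPart_zero, unifPart_self a b hm] using
    sum_norm_sub_le_variationOnFromTo hk ((unifPart_mono hab m).monotoneOn _)
      fun i hi => hs (unifPart_mem_Icc hab hm hi)

lemma abs_rsSum_sub_inner_le {z w : ℝ → E} {a b η : ℝ} {p : E} (hab : a ≤ b)
    {m : ℕ} (hm : m ≠ 0) (hz : ∀ u ∈ Icc a b, ‖z u - p‖ ≤ η) :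
    |rsSum z w a b m - ⟪p, w b - w a⟫|
      ≤ η * ∑ i ∈ Finset.range m, ‖w (unifPart a b m (i + 1)) - w (unifPart a b m i)‖ := by
  have htel : ⟪p, w b - w a⟫
      = ∑ i ∈ Finset.range m, ⟪p, w (unifPart a b m (i + 1)) - w (unifPart a b m i)⟫ := by
    rw [← inner_sum, Finset.sum_range_sub (fun i => w (unifPart a b m i)), unifPart_self a b hm,
      unifPart_zero]
  rw [rsSum, htel, ← Finset.sum_sub_distrib, Finset.mul_sum]
  refine (Finset.abs_sum_le_sum_abs _ _).trans (Finset.sum_le_sum fun i hi => ?_)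
  rw [← inner_sub_left]
  exact (abs_real_inner_le_norm _ _).trans <| mul_le_mul_of_nonneg_right
    (hz _ (unifPart_mem_Icc hab hm (Finset.mem_range.mp hi))) (norm_nonneg _)

lemma lsInt.tendsto_rsSum {g k : ℝ → Euc d} {a b I : ℝ} (h : lsInt g k a b I) (hab : a < b) :
    Tendsto (rsSum g k a b) atTop (𝓝 I) := by
  rw [Metric.tendsto_atTop]
  intro ε hε
  obtain ⟨δ, hδ, hI⟩ := h (ε / 2) (half_pos hε)
  obtain ⟨M, hM⟩ := exists_nat_gt ((b - a) / δ)
  refine ⟨M, fun m hm => ?_⟩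
  have hMm : (M : ℝ) ≤ m := by exact_mod_cast hm
  have hm₀ : (0 : ℝ) < m := (div_pos (sub_pos.mpr hab) hδ).trans (hM.trans_le hMm)
  have hmesh : (b - a) / m ≤ δ := by
    rw [div_lt_iff₀ hδ] at hM
    rw [div_le_iff₀ hm₀]
    nlinarith
  have hstep (i : ℕ) : unifPart a b m i < unifPart a b m (i + 1) ∧
      unifPart a b m (i + 1) - unifPart a b m i ≤ δ := by
    rw [← sub_pos, unifPart_succ_sub]
    exact ⟨div_pos (sub_pos.mpr hab) hm₀, hmesh⟩
  rw [Real.dist_eq]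
  exact (hI m _ (unifPart_zero a b m) (unifPart_self a b (by exact_mod_cast hm₀.ne'))
    fun i _ => hstep i).trans_lt (half_lt_self hε)

/-- Condition (ii) of `SP(A, Π; y)`, stated for an arbitrary integrator `k` in place of `k^c`. -/
def SkorokhodIneq (A : Set (Euc d × Euc d)) (x k : ℝ → Euc d) : Prop :=
  ∀ α β : Euc d, (α, β) ∈ A → ∀ s t : ℝ, 0 ≤ s → s < t →
    ∃ I : ℝ, lsInt (fun u => x u - α) k s t I ∧ 0 ≤ I - ∫ u in Ioc s t, ⟪x u - α, β⟫

lemma le_setIntegral_inner {x : ℝ → E} {a b η : ℝ} {p : E} (hx : ContinuousOn x (Icc a b))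
    (hab : a ≤ b) (hosc : ∀ u ∈ Icc a b, ‖x u - p‖ ≤ η) (β : E) :
    (⟪p, β⟫ - η * ‖β‖) * (b - a) ≤ ∫ u in Ioc a b, ⟪x u, β⟫ := by
  have hint : IntegrableOn (fun u => ⟪x u, β⟫) (Ioc a b) :=
    (hx.inner continuousOn_const).integrableOn_Icc.mono_set Ioc_subset_Icc_self
  have hle : ∀ u ∈ Ioc a b, ⟪p, β⟫ - η * ‖β‖ ≤ ⟪x u, β⟫ := fun u hu => by
    have h := (abs_real_inner_le_norm (x u - p) β).trans
      (mul_le_mul_of_nonneg_right (hosc u (Ioc_subset_Icc_self hu)) (norm_nonneg β))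
    rw [inner_sub_left] at h
    linarith [neg_abs_le (⟪x u, β⟫ - ⟪p, β⟫)]
  simpa [Real.volume_real_Ioc_of_le hab] using
    setIntegral_ge_of_const_le_real measurableSet_Ioc (by simp) hle hint

/-- On a short interval `[a, b]` where `x ≈ p`, the Skorokhod inequality says that `k b - k a`
behaves like an element of `(b - a) • A p`, up to an error controlled by the oscillation `η`. -/
lemma SkorokhodIneq.inner_sub_ge {A : Set (Euc d × Euc d)} {x k : ℝ → Euc d}
    (h : SkorokhodIneq A x k) (hk : LocallyBoundedVariationOn k (Ici 0))
    (hx : ContinuousOn x (Ici 0)) {a b η : ℝ} {p α β : Euc d} (ha : 0 ≤ a) (hab : a < b)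
    (hαβ : (α, β) ∈ A) (hosc : ∀ u ∈ Icc a b, ‖x u - p‖ ≤ η) :
    ⟪p - α, β⟫ * (b - a) - η * (‖β‖ * (b - a) + variationOnFromTo k (Ici 0) a b)
      ≤ ⟪p - α, k b - k a⟫ := by
  obtain ⟨I, hI, hIge⟩ := h α β hαβ a b ha hab
  have hη : 0 ≤ η := (norm_nonneg _).trans (hosc a (left_mem_Icc.mpr hab.le))
  have hIcc : Icc a b ⊆ Ici 0 := fun u hu => ha.trans hu.1
  have hosc' : ∀ u ∈ Icc a b, ‖(x u - α) - (p - α)‖ ≤ η := by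
    simpa only [sub_sub_sub_cancel_right] using hosc
  have hint := le_setIntegral_inner (x := fun u => x u - α)
    ((hx.mono hIcc).sub continuousOn_const) hab.le hosc' β
  have herr : |I - ⟪p - α, k b - k a⟫| ≤ η * variationOnFromTo k (Ici 0) a b := by
    refine le_of_tendsto ((hI.tendsto_rsSum hab).sub_const _).abs
      (eventually_atTop.mpr ⟨1, fun m hm => ?_⟩)
    have hm : m ≠ 0 := Nat.one_le_iff_ne_zero.mp hm
    exact (abs_rsSum_sub_inner_le hab.le hm hosc').trans
      (mul_le_mul_of_nonneg_left (sum_norm_unifPart_sub_le hk hab.le hIcc hm) hη)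
  linarith [(abs_le.mp herr).2]

lemma ContinuousWithinAt.eventually_norm_sub_le_of_Icc {F : Type*} [SeminormedAddCommGroup F]
    {x : ℝ → F} {s : Set ℝ} {u : ℝ} (hx : ContinuousWithinAt x s u) {ι : Type*}
    {l : Filter ι} {a b : ι → ℝ} (ha : Tendsto a l (𝓝 u)) (hb : Tendsto b l (𝓝 u))
    (hs : ∀ i, Icc (a i) (b i) ⊆ s) {η : ℝ} (hη : 0 < η) :
    ∀ᶠ i in l, ∀ v ∈ Icc (a i) (b i), ‖x v - x u‖ ≤ η := by
  obtain ⟨δ, hδ, hxδ⟩ := Metric.continuousWithinAt_iff.mp hx η hη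
  filter_upwards [ha (Metric.ball_mem_nhds u hδ), hb (Metric.ball_mem_nhds u hδ)]
    with i hai hbi v hv
  rw [mem_preimage, Real.ball_eq_Ioo] at hai hbi
  have hvu : dist v u < δ := by
    rw [Real.dist_eq, abs_sub_lt_iff]
    constructor <;> linarith [hai.1, hbi.2, hv.1, hv.2]
  rw [← dist_eq_norm]
  exact (hxδ (hs i hv) hvu).le

lemma SkorokhodIneq.inner_le_of_tendsto {A : Set (Euc d × Euc d)} {x k : ℝ → Euc d}
    (h : SkorokhodIneq A x k) (hk : LocallyBoundedVariationOn k (Ici 0))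
    (hx : ContinuousOn x (Ici 0)) {a b r : ℕ → ℝ} {u m : ℝ} {G α β : Euc d}
    (ha₀ : ∀ g, 0 ≤ a g) (hab : ∀ g, a g < b g)
    (hr : ∀ g, b g - a g ≤ r g ∧ variationOnFromTo k (Ici 0) (a g) (b g) ≤ r g)
    (ha : Tendsto a atTop (𝓝 u)) (hb : Tendsto b atTop (𝓝 u))
    (hG : Tendsto (fun g => (r g)⁻¹ • (k (b g) - k (a g))) atTop (𝓝 G))
    (hm : Tendsto (fun g => (b g - a g) / r g) atTop (𝓝 m)) (hαβ : (α, β) ∈ A) :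
    ⟪x u - α, β⟫ * m ≤ ⟪x u - α, G⟫ := by
  have hu : 0 ≤ u := ge_of_tendsto' ha ha₀
  refine le_of_forall_pos_le_add fun ε hε => ?_
  set η := ε / (‖β‖ + 1)
  have hη : 0 < η := by positivity
  have hηε : η * (‖β‖ + 1) = ε := div_mul_cancel₀ _ (by positivity)
  have hev : ∀ᶠ g in atTop, ⟪x u - α, β⟫ * ((b g - a g) / r g) - η * (‖β‖ + 1)
      ≤ ⟪x u - α, (r g)⁻¹ • (k (b g) - k (a g))⟫ := by
    filter_upwards [(hx u hu).eventually_norm_sub_le_of_Icc ha hb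
      (fun g v hv => (ha₀ g).trans hv.1) hη] with g hosc
    have hr₀ : 0 < r g := (sub_pos.mpr (hab g)).trans_le (hr g).1
    have hloc := h.inner_sub_ge hk hx (ha₀ g) (hab g) hαβ hosc
    have h₁ := mul_le_mul_of_nonneg_left (hr g).1 (mul_nonneg hη.le (norm_nonneg β))
    have h₂ := mul_le_mul_of_nonneg_left (hr g).2 hη.le
    have hscale : r g * (⟪x u - α, β⟫ * ((b g - a g) / r g) - η * (‖β‖ + 1))
        = ⟪x u - α, β⟫ * (b g - a g) - η * (‖β‖ + 1) * r g := by
      field_simp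
    rw [real_inner_smul_right, le_inv_mul_iff₀ hr₀, hscale]
    linarith
  have := le_of_tendsto_of_tendsto ((hm.const_mul _).sub_const _)
    (tendsto_const_nhds.inner hG) hev
  linarith

lemma inner_le_of_rsSum_le {z k k' : ℝ → E} (hk : LocallyBoundedVariationOn k (Ici 0))
    (hk' : LocallyBoundedVariationOn k' (Ici 0)) {u c : ℝ} (hz : ContinuousWithinAt z (Ici 0) u)
    {a b r : ℕ → ℝ} {n : ℕ → ℕ} {D : E} (ha₀ : ∀ g, 0 ≤ a g) (hab : ∀ g, a g < b g)
    (hr₀ : ∀ g, 0 < r g)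
    (hr : ∀ g, variationOnFromTo k (Ici 0) (a g) (b g)
      + variationOnFromTo k' (Ici 0) (a g) (b g) ≤ r g)
    (ha : Tendsto a atTop (𝓝 u)) (hb : Tendsto b atTop (𝓝 u)) (hn : ∀ g, n g ≠ 0)
    (hS : ∀ g, rsSum z (k - k') (a g) (b g) (n g) ≤ c * r g)
    (hD : Tendsto (fun g => (r g)⁻¹ • ((k - k') (b g) - (k - k') (a g))) atTop (𝓝 D)) :
    ⟪z u, D⟫ ≤ c := by
  refine le_of_forall_pos_le_add fun ε hε => le_of_tendsto (tendsto_const_nhds.inner hD) ?_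
  filter_upwards [hz.eventually_norm_sub_le_of_Icc ha hb (fun g v hv => (ha₀ g).trans hv.1) hε]
    with g hosc
  have hIcc : Icc (a g) (b g) ⊆ Ici 0 := fun v hv => (ha₀ g).trans hv.1
  have hvar : ∑ i ∈ Finset.range (n g), ‖(k - k') (unifPart (a g) (b g) (n g) (i + 1))
      - (k - k') (unifPart (a g) (b g) (n g) i)‖ ≤ r g := by
    refine le_trans ?_ ((add_le_add (sum_norm_unifPart_sub_le hk (hab g).le hIcc (hn g))
      (sum_norm_unifPart_sub_le hk' (hab g).le hIcc (hn g))).trans (hr g))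
    rw [← Finset.sum_add_distrib]
    refine Finset.sum_le_sum fun i _ => ?_
    rw [Pi.sub_apply, Pi.sub_apply, sub_sub_sub_comm]
    exact norm_sub_le _ _
  have herr := (abs_rsSum_sub_inner_le (w := k - k') (hab g).le (hn g) hosc).trans
    (mul_le_mul_of_nonneg_left hvar hε.le)
  rw [real_inner_smul_right, inv_mul_le_iff₀ (hr₀ g)]
  linarith [(abs_le.mp herr).1, hS g]

lemma inner_sub_nonneg_of_mem_closure {S : Set E} {p q G : E} (h : ∀ α ∈ S, 0 ≤ ⟪p - α, G⟫)
    (hq : q ∈ closure S) : 0 ≤ ⟪p - q, G⟫ :=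
  closure_minimal (t := {q | 0 ≤ ⟪p - q, G⟫}) h (isClosed_le continuous_const (by fun_prop)) hq

lemma MaximalMonotoneGraph.mem_of_inner_le {A : Set (Euc d × Euc d)}
    (hA : MaximalMonotoneGraph A) {p G : Euc d} {m : ℝ} (hm : 0 < m)
    (hG : ∀ α β, (α, β) ∈ A → ⟪p - α, β⟫ * m ≤ ⟪p - α, G⟫) : (p, m⁻¹ • G) ∈ A := by
  refine hA.2 p (m⁻¹ • G) fun q hq => ?_
  have h := hG q.1 q.2 hq
  rw [inner_sub_left, real_inner_smul_left, real_inner_comm _ G, real_inner_comm _ q.2,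
    sub_nonneg, le_inv_mul_iff₀ hm]
  linarith

/-- Hypothesis `hG` says `G ∈ m • A p` when `m > 0`, and that `G` is normal to
`closure (D(A))` at `p` when `m = 0`. -/
lemma MaximalMonotoneGraph.inner_sub_nonneg {A : Set (Euc d × Euc d)}
    (hA : MaximalMonotoneGraph A) {p p' G H : Euc d} {m : ℝ} (hm : 0 ≤ m)
    (hp : p ∈ closure (opDomain A)) (hp' : p' ∈ closure (opDomain A))
    (hG : ∀ α β, (α, β) ∈ A → ⟪p - α, β⟫ * m ≤ ⟪p - α, G⟫)
    (hH : ∀ α β, (α, β) ∈ A → ⟪p' - α, β⟫ * m ≤ ⟪p' - α, H⟫) :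
    0 ≤ ⟪p - p', G - H⟫ := by
  rcases hm.eq_or_lt with rfl | hm
  · have hG' : 0 ≤ ⟪p - p', G⟫ := inner_sub_nonneg_of_mem_closure
      (fun α (⟨β, hαβ⟩ : α ∈ opDomain A) => by simpa using hG α β hαβ) hp'
    have hH' : 0 ≤ ⟪p' - p, H⟫ := inner_sub_nonneg_of_mem_closure
      (fun α (⟨β, hαβ⟩ : α ∈ opDomain A) => by simpa using hH α β hαβ) hp
    have hneg : ⟪p - p', H⟫ = -⟪p' - p, H⟫ := by rw [← inner_neg_left, neg_sub]
    rw [inner_sub_right, hneg]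
    linarith
  · have h := hA.1 _ (hA.mem_of_inner_le hm hG) _ (hA.mem_of_inner_le hm hH)
    rw [← smul_sub, real_inner_smul_left, real_inner_comm] at h
    exact (mul_nonneg_iff_of_pos_left (inv_pos.mpr hm)).mp h
lemma exists_tendsto_of_bisection (P : ℝ → ℝ → Prop) {a₀ b₀ : ℝ} (h₀ : a₀ < b₀)
    (hP₀ : P a₀ b₀)
    (hP : ∀ a b, a₀ ≤ a → a < b → P a b → P a ((a + b) / 2) ∨ P ((a + b) / 2) b) :
    ∃ (u : ℝ) (a b : ℕ → ℝ), (∀ g, a₀ ≤ a g ∧ a g < b g ∧ P (a g) (b g)) ∧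
      Tendsto a atTop (𝓝 u) ∧ Tendsto b atTop (𝓝 u) := by
  classical
  let Q := {q : ℝ × ℝ // a₀ ≤ q.1 ∧ q.1 < q.2 ∧ P q.1 q.2}
  let half : Q → Q := fun q =>
    if h : P q.1.1 ((q.1.1 + q.1.2) / 2) then
      ⟨(q.1.1, (q.1.1 + q.1.2) / 2), q.2.1, by linarith [q.2.2.1], h⟩
    else
      ⟨((q.1.1 + q.1.2) / 2, q.1.2), by linarith [q.2.1, q.2.2.1], by linarith [q.2.2.1],
        (hP _ _ q.2.1 q.2.2.1 q.2.2.2).resolve_left h⟩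
  have hhalf (q : Q) : q.1.1 ≤ (half q).1.1 ∧ (half q).1.2 ≤ q.1.2 ∧
      (half q).1.2 - (half q).1.1 = (q.1.2 - q.1.1) / 2 := by
    have := q.2.2.1
    unfold half
    split_ifs <;> refine ⟨?_, ?_, ?_⟩ <;> dsimp only <;> linarith
  let F : ℕ → Q := fun g => half^[g] ⟨(a₀, b₀), le_rfl, h₀, hP₀⟩
  have hF (g : ℕ) : F (g + 1) = half (F g) := Function.iterate_succ_apply' _ _ _
  have hlen (g : ℕ) : (F g).1.2 - (F g).1.1 = (b₀ - a₀) / 2 ^ g := by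
    induction g with
    | zero => simp [F]
    | succ g ih => rw [hF, (hhalf _).2.2, ih, pow_succ, div_div]
  have ha_mono : Monotone fun g => (F g).1.1 :=
    monotone_nat_of_le_succ fun g => by simpa only [hF] using (hhalf (F g)).1
  have hb_anti : Antitone fun g => (F g).1.2 :=
    antitone_nat_of_succ_le fun g => by simpa only [hF] using (hhalf (F g)).2.1
  have hbdd : BddAbove (range fun g => (F g).1.1) :=
    ⟨b₀, by rintro _ ⟨g, rfl⟩; exact (F g).2.2.1.le.trans (hb_anti (Nat.zero_le g))⟩
  have ha_lim := tendsto_atTop_ciSup ha_mono hbdd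
  have hlen_lim : Tendsto (fun g : ℕ => (b₀ - a₀) / 2 ^ g) atTop (𝓝 0) :=
    tendsto_const_nhds.div_atTop (tendsto_pow_atTop_atTop_of_one_lt one_lt_two)
  refine ⟨_, _, _, fun g => (F g).2, ha_lim, ?_⟩
  simpa [← hlen] using ha_lim.add hlen_lim

lemma frequently_le_or_of_succ_eq_add {S S₁ S₂ : ℕ → ℝ} {c₁ c₂ : ℝ}
    (hS : ∀ N, S (N + 1) = S₁ N + S₂ N) (h : ∃ᶠ N in atTop, S N ≤ c₁ + c₂) :
    (∃ᶠ N in atTop, S₁ N ≤ c₁) ∨ ∃ᶠ N in atTop, S₂ N ≤ c₂ := by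
  rw [← map_add_atTop_eq_nat 1, frequently_map] at h
  rw [← frequently_or_distrib]
  refine h.mono fun N hN => ?_
  by_contra! h'
  linarith [hS N]

def ctrlVar {F : Type*} [SeminormedAddCommGroup F] (k k' : ℝ → F) (a b : ℝ) : ℝ :=
  variationOnFromTo k (Ici 0) a b + variationOnFromTo k' (Ici 0) a b + (b - a)

section ctrlVar

variable {F : Type*} [SeminormedAddCommGroup F] {k k' : ℝ → F} {a b : ℝ}

lemma ctrlVar_add (hk : LocallyBoundedVariationOn k (Ici 0))
    (hk' : LocallyBoundedVariationOn k' (Ici 0)) {r : ℝ} (ha : 0 ≤ a) (hr : 0 ≤ r) (hb : 0 ≤ b) :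
    ctrlVar k k' a r + ctrlVar k k' r b = ctrlVar k k' a b := by
  simp only [ctrlVar, ← variationOnFromTo.add hk ha hr hb, ← variationOnFromTo.add hk' ha hr hb]
  ring

lemma variationOnFromTo_add_le_ctrlVar (hab : a ≤ b) :
    variationOnFromTo k (Ici 0) a b + variationOnFromTo k' (Ici 0) a b ≤ ctrlVar k k' a b :=
  le_add_of_nonneg_right (sub_nonneg.mpr hab)

lemma variationOnFromTo_le_ctrlVar_left (hab : a ≤ b) :
    variationOnFromTo k (Ici 0) a b ≤ ctrlVar k k' a b := by
  linarith [variationOnFromTo.nonneg_of_le k' (Ici 0) hab, variationOnFromTo_add_le_ctrlVar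
    (k := k) (k' := k') hab]

lemma variationOnFromTo_le_ctrlVar_right (hab : a ≤ b) :
    variationOnFromTo k' (Ici 0) a b ≤ ctrlVar k k' a b := by
  linarith [variationOnFromTo.nonneg_of_le k (Ici 0) hab, variationOnFromTo_add_le_ctrlVar
    (k := k) (k' := k') hab]

lemma sub_le_ctrlVar (hab : a ≤ b) : b - a ≤ ctrlVar k k' a b := by
  have := variationOnFromTo.nonneg_of_le k (Ici 0) hab
  have := variationOnFromTo.nonneg_of_le k' (Ici 0) hab
  simp only [ctrlVar]
  linarith

lemma ctrlVar_pos (hab : a < b) : 0 < ctrlVar k k' a b :=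
  (sub_pos.mpr hab).trans_le (sub_le_ctrlVar hab.le)

end ctrlVar

lemma norm_inv_smul_sub_le_one {F : Type*} [NormedAddCommGroup F] [NormedSpace ℝ F]
    {k : ℝ → F} (hk : LocallyBoundedVariationOn k (Ici 0)) {a b r : ℝ} (ha : 0 ≤ a)
    (hab : a ≤ b) (hr₀ : 0 < r) (hr : variationOnFromTo k (Ici 0) a b ≤ r) :
    ‖r⁻¹ • (k b - k a)‖ ≤ 1 := by
  rw [norm_smul, norm_inv, Real.norm_of_nonneg hr₀.le, inv_mul_le_one₀ hr₀]
  exact (norm_sub_le_variationOnFromTo hk ha (ha.trans hab) hab).trans hr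

def normIncr {F : Type*} [NormedAddCommGroup F] [NormedSpace ℝ F] (k k' : ℝ → F) (a b : ℝ) :
    F × F × ℝ :=
  ((ctrlVar k k' a b)⁻¹ • (k b - k a), (ctrlVar k k' a b)⁻¹ • (k' b - k' a),
    (b - a) / ctrlVar k k' a b)

lemma normIncr_mem_closedBall {F : Type*} [NormedAddCommGroup F] [NormedSpace ℝ F]
    {k k' : ℝ → F} (hk : LocallyBoundedVariationOn k (Ici 0))
    (hk' : LocallyBoundedVariationOn k' (Ici 0)) {a b : ℝ} (ha : 0 ≤ a) (hab : a < b) :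
    normIncr k k' a b ∈ Metric.closedBall 0 1 := by
  have hr₀ := ctrlVar_pos (k := k) (k' := k') hab
  rw [Metric.mem_closedBall, dist_zero_right, normIncr, Prod.norm_def, Prod.norm_def,
    Real.norm_of_nonneg (div_nonneg (sub_nonneg.mpr hab.le) hr₀.le)]
  refine max_le (norm_inv_smul_sub_le_one hk ha hab.le hr₀
    (variationOnFromTo_le_ctrlVar_left hab.le)) (max_le ?_ ?_)
  · exact norm_inv_smul_sub_le_one hk' ha hab.le hr₀ (variationOnFromTo_le_ctrlVar_right hab.le)
  · exact (div_le_one hr₀).mpr (sub_le_ctrlVar hab.le)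

lemma exists_tendsto_rsSum_le_of_forall {z k k' : ℝ → E}
    (hk : LocallyBoundedVariationOn k (Ici 0)) (hk' : LocallyBoundedVariationOn k' (Ici 0))
    {t₀ c : ℝ} (ht₀ : 0 < t₀) (h : ∀ N : ℕ, rsSum z (k - k') 0 t₀ (2 ^ N) ≤ c * ctrlVar k k' 0 t₀) :
    ∃ (u : ℝ) (a b : ℕ → ℝ) (N : ℕ → ℕ), (∀ g, 0 ≤ a g ∧ a g < b g ∧
        rsSum z (k - k') (a g) (b g) (2 ^ N g) ≤ c * ctrlVar k k' (a g) (b g)) ∧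
      Tendsto a atTop (𝓝 u) ∧ Tendsto b atTop (𝓝 u) := by
  obtain ⟨u, a, b, hP, ha, hb⟩ := exists_tendsto_of_bisection
    (fun a b => ∃ᶠ N in atTop, rsSum z (k - k') a b (2 ^ N) ≤ c * ctrlVar k k' a b) ht₀
    (Frequently.of_forall h) fun a b ha hab hP => by
      refine frequently_le_or_of_succ_eq_add
        (S := fun N => rsSum z (k - k') a b (2 ^ N)) (fun N => ?_) ?_
      · rw [pow_succ, mul_comm, rsSum_two_mul _ _ _ _ (pow_ne_zero N two_ne_zero)]
      · rwa [← mul_add, ctrlVar_add hk hk' ha (by linarith) (by linarith)]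
  choose N hN using fun g => (hP g).2.2.exists
  exact ⟨u, a, b, N, fun g => ⟨(hP g).1, (hP g).2.1, hN g⟩, ha, hb⟩

/-- Were the sums below `-c` for every `N`, bisection would give intervals shrinking to some `u`
on which they stay below `-θ ρ`, with `ρ = ctrlVar k k'`. Along a subsequence the
`ρ`-normalized increments of `k`, `k'` and of time converge to `G`, `H`, `m`; the Skorokhod
inequalities then make `⟪x u - x' u, G - H⟫` nonnegative by monotonicity, while the sums make
it at most `-θ`. -/
lemma SkorokhodIneq.exists_neg_lt_rsSum {A : Set (Euc d × Euc d)} (hA : MaximalMonotoneGraph A)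
    {x k x' k' : ℝ → Euc d} (h : SkorokhodIneq A x k) (h' : SkorokhodIneq A x' k')
    (hx : ContinuousOn x (Ici 0)) (hx' : ContinuousOn x' (Ici 0))
    (hk : LocallyBoundedVariationOn k (Ici 0)) (hk' : LocallyBoundedVariationOn k' (Ici 0))
    (hdom : ∀ t, 0 ≤ t → x t ∈ closure (opDomain A))
    (hdom' : ∀ t, 0 ≤ t → x' t ∈ closure (opDomain A)) {t₀ c : ℝ} (ht₀ : 0 < t₀) (hc : 0 < c) :
    ∃ N : ℕ, -c < rsSum (x - x') (k - k') 0 t₀ (2 ^ N) := by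
  by_contra! hbad
  set θ := c / ctrlVar k k' 0 t₀
  have hθ : 0 < θ := div_pos hc (ctrlVar_pos ht₀)
  obtain ⟨u, a, b, N, hP, ha, hb⟩ := exists_tendsto_rsSum_le_of_forall hk hk' ht₀ (c := -θ)
    fun N => by rw [neg_mul, div_mul_cancel₀ c (ctrlVar_pos ht₀).ne']; exact hbad N
  have hu : 0 ≤ u := ge_of_tendsto' ha fun g => (hP g).1
  let r g := ctrlVar k k' (a g) (b g)
  have hr₀ (g : ℕ) : 0 < r g := ctrlVar_pos (hP g).2.1
  obtain ⟨⟨G, H, m⟩, -, φ, hφ, hlim⟩ := tendsto_subseq_of_bounded Metric.isBounded_closedBall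
    fun g => normIncr_mem_closedBall hk hk' (hP g).1 (hP g).2.1
  have hm : 0 ≤ m := ge_of_tendsto' hlim.snd_nhds.snd_nhds fun g =>
    div_nonneg (sub_nonneg.mpr (hP (φ g)).2.1.le) (hr₀ (φ g)).le
  have haφ := ha.comp hφ.tendsto_atTop
  have hbφ := hb.comp hφ.tendsto_atTop
  have hG (α β : Euc d) (hαβ : (α, β) ∈ A) : ⟪x u - α, β⟫ * m ≤ ⟪x u - α, G⟫ :=
    h.inner_le_of_tendsto hk hx (r := r ∘ φ) (fun g => (hP (φ g)).1) (fun g => (hP (φ g)).2.1)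
      (fun g => ⟨sub_le_ctrlVar (hP (φ g)).2.1.le,
        variationOnFromTo_le_ctrlVar_left (hP (φ g)).2.1.le⟩)
      haφ hbφ hlim.fst_nhds hlim.snd_nhds.snd_nhds hαβ
  have hH (α β : Euc d) (hαβ : (α, β) ∈ A) : ⟪x' u - α, β⟫ * m ≤ ⟪x' u - α, H⟫ :=
    h'.inner_le_of_tendsto hk' hx' (r := r ∘ φ) (fun g => (hP (φ g)).1)
      (fun g => (hP (φ g)).2.1) (fun g => ⟨sub_le_ctrlVar (hP (φ g)).2.1.le,
        variationOnFromTo_le_ctrlVar_right (hP (φ g)).2.1.le⟩)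
      haφ hbφ hlim.snd_nhds.fst_nhds hlim.snd_nhds.snd_nhds hαβ
  have hneg := inner_le_of_rsSum_le hk hk' ((hx.sub hx') u hu) (r := r ∘ φ)
    (n := fun g => 2 ^ N (φ g)) (fun g => (hP (φ g)).1) (fun g => (hP (φ g)).2.1)
    (fun g => hr₀ (φ g)) (fun g => variationOnFromTo_add_le_ctrlVar (hP (φ g)).2.1.le) haφ hbφ
    (fun g => pow_ne_zero _ two_ne_zero) (fun g => (hP (φ g)).2.2)
    ((hlim.fst_nhds.sub hlim.snd_nhds.fst_nhds).congr fun g => by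
      simp only [Function.comp_apply, normIncr, Pi.sub_apply, ← smul_sub, sub_sub_sub_comm, r])
  have hpos := hA.inner_sub_nonneg hm (hdom u hu) (hdom' u hu) hG hH
  rw [Pi.sub_apply] at hneg
  linarith

lemma SkorokhodIneq.eqOn {A : Set (Euc d × Euc d)} (hA : MaximalMonotoneGraph A)
    {x k x' k' : ℝ → Euc d} (h : SkorokhodIneq A x k) (h' : SkorokhodIneq A x' k')
    (hx : ContinuousOn x (Ici 0)) (hx' : ContinuousOn x' (Ici 0))
    (hk : LocallyBoundedVariationOn k (Ici 0)) (hk' : LocallyBoundedVariationOn k' (Ici 0))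
    (hdom : ∀ t, 0 ≤ t → x t ∈ closure (opDomain A))
    (hdom' : ∀ t, 0 ≤ t → x' t ∈ closure (opDomain A))
    (hxk : ∀ t, 0 ≤ t → x t + k t = x' t + k' t) (hk₀ : k 0 = k' 0) :
    EqOn x x' (Ici 0) := by
  intro t (ht : 0 ≤ t)
  have hzw : EqOn (x - x') (-(k - k')) (Icc 0 t) := fun s hs => by
    rw [Pi.sub_apply, Pi.neg_apply, Pi.sub_apply, neg_sub, sub_eq_sub_iff_add_eq_add,
      hxk s hs.1, add_comm]
  have hz₀ : (x - x') 0 = 0 := by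
    rw [hzw (left_mem_Icc.mpr ht), Pi.neg_apply, Pi.sub_apply, hk₀, sub_self, neg_zero]
  rcases ht.eq_or_lt with rfl | ht
  · exact sub_eq_zero.mp hz₀
  by_contra hne
  have hpos : 0 < ‖(x - x') t‖ ^ 2 / 2 := by
    have : (x - x') t ≠ 0 := sub_ne_zero.mpr hne
    positivity
  obtain ⟨N, hN⟩ := h.exists_neg_lt_rsSum hA h' hx hx' hk hk' hdom hdom' ht hpos
  have hsq := norm_sq_le_two_mul_rsSum (x - x') 0 t (pow_ne_zero N two_ne_zero) hz₀
  rw [rsSum_congr_right ht.le hzw, rsSum_neg_right] at hsq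
  linarith

end

theorem skorokhod_problem_continuous_input_general {d : ℕ} (A : Set (Euc d × Euc d))
    (hA : MaximalMonotoneGraph A)
    (proj proj' : Euc d → Euc d) (hproj : IsGenProj A proj) (hproj' : IsGenProj A proj')
    (y : ℝ → Euc d) (hy : ContinuousOn y (Ici 0))
    (x k x' k' : ℝ → Euc d)
    (hsol : SkorokhodSolution A proj y x k)
    (hsol' : SkorokhodSolution A proj' y x' k') :
    ContinuousOn x (Ici 0) ∧ ContinuousOn k (Ici 0) ∧
      ∀ t : ℝ, 0 ≤ t → x t = x' t ∧ k t = k' t := by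
  have hjump := hsol.jump_eq_zero hproj hy
  have hjump' := hsol'.jump_eq_zero hproj' hy
  obtain ⟨-, hk_cad, hxk, hk, hk₀, hineq, -⟩ := hsol
  obtain ⟨-, hk_cad', hxk', hk', hk₀', hineq', -⟩ := hsol'
  rw [contPart_eq_self hjump] at hineq
  rw [contPart_eq_self hjump'] at hineq'
  have hkc := hk_cad.continuousOn_of_jump_eq_zero hjump
  have hxc : ContinuousOn x (Ici 0) := (hy.sub hkc).congr fun t ht => (hxk t ht).1
  have hxc' : ContinuousOn x' (Ici 0) :=
    (hy.sub (hk_cad'.continuousOn_of_jump_eq_zero hjump')).congr fun t ht => (hxk' t ht).1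
  have hxx : EqOn x x' (Ici 0) := SkorokhodIneq.eqOn hA hineq hineq' hxc hxc' hk hk'
    (fun t ht => (hxk t ht).2) (fun t ht => (hxk' t ht).2)
    (fun t ht => by rw [(hxk t ht).1, (hxk' t ht).1, sub_add_cancel, sub_add_cancel])
    (hk₀.trans hk₀'.symm)
  refine ⟨hxc, hkc, fun t ht => ⟨hxx ht, ?_⟩⟩
  rw [← sub_sub_cancel (y t) (k t), ← (hxk t ht).1, hxx ht, (hxk' t ht).1, sub_sub_cancel]

/-- For continuous input `y`, any solution of the Skorokhod problem
`SP(A, Π; y)` is continuous and does not depend on the choice of the generalized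
projection `Π`. -/
theorem skorokhod_problem_continuous_input {d : ℕ} (A : Set (Euc d × Euc d))
    (hA : MaximalMonotoneGraph A)
    (proj proj' : Euc d → Euc d) (hproj : IsGenProj A proj) (hproj' : IsGenProj A proj')
    (y : ℝ → Euc d) (hy : ContinuousOn y (Ici 0)) (hy0 : y 0 ∈ closure (opDomain A))
    (x k x' k' : ℝ → Euc d)
    (hsol : SkorokhodSolution A proj y x k)
    (hsol' : SkorokhodSolution A proj' y x' k') :
    ContinuousOn x (Ici 0) ∧ ContinuousOn k (Ici 0) ∧
      ∀ t : ℝ, 0 ≤ t → x t = x' t ∧ k t = k' t :=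
  skorokhod_problem_continuous_input_general A hA proj proj' hproj hproj' y hy x k x' k' hsol hsol'

end
end
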